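/- For μ₁, μ₂ ∈ ℝ, the KL divergence between the Gaussian distributions N(μ₁,1) truncated to [0,∞) and N(μ₂,1) truncated to [0,∞) equals (1/2)(1 − q(ξ))·(μ₁−μ₂)² for some ξ between μ₁ and μ₂, where q(x) = φ(x)²/Φ(x)² + x·φ(x)/Φ(x). In particular KL(TN(μ₁,1;1) ‖ TN(μ₂,1;1)) ≤ (1/2)(μ₁−μ₂)². -/

import Mathlib

/-!
For `x ≥ 0` the log-ratio of the two truncated densities is affine in `x`:
`log (tnPdf μ₁ x / tnPdf μ₂ x) = (μ₁ - μ₂) (x - μ₁) + (μ₁ - μ₂)² / 2 + log Φ(μ₂) - log Φ(μ₁)`,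
and the mean of `TN(μ,1;1)` is `μ + φ(μ)/Φ(μ)`. Hence
`KL = (μ₁ - μ₂)² / 2 + [log Φ(μ₂) - log Φ(μ₁) - (φ/Φ)(μ₁) (μ₂ - μ₁)]`, where the bracket is the
first-order Taylor remainder of `log Φ` at `μ₁`; as `(log Φ)' = φ/Φ` and `(φ/Φ)' = -q`, its
Lagrange form `-q(ξ) (μ₂ - μ₁)² / 2` produces `ξ`. Finally `q ≥ 0`, because
`q = φ (φ + xΦ) / Φ²` and `φ(x) + xΦ(x) = ∫_{t ≤ x} (x - t) φ(t) dt ≥ 0`.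
-/

/-- standard normal pdf -/
noncomputable def gaussPdf (x : ℝ) : ℝ :=
  (Real.sqrt (2 * Real.pi))⁻¹ * Real.exp (-x ^ 2 / 2)

/-- standard normal cdf -/
noncomputable def gaussCdf (x : ℝ) : ℝ := ∫ t in Set.Iic x, gaussPdf t

/-- negative derivative of the inverse Mills ratio -/
noncomputable def millsQ (x : ℝ) : ℝ :=
  gaussPdf x ^ 2 / gaussCdf x ^ 2 + x * gaussPdf x / gaussCdf x

/-- density of the normal distribution `N(μ,1)` truncated to `[0,∞)` -/
noncomputable def tnPdf (μ x : ℝ) : ℝ :=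
  if 0 ≤ x then Real.exp (-(x - μ) ^ 2 / 2) / (Real.sqrt (2 * Real.pi) * gaussCdf μ) else 0

/-- KL divergence `KL(TN(μ₁,1;1) ‖ TN(μ₂,1;1))` as the integral of the log density ratio -/
noncomputable def klTN (μ₁ μ₂ : ℝ) : ℝ :=
  ∫ x in Set.Ici (0 : ℝ), Real.log (tnPdf μ₁ x / tnPdf μ₂ x) * tnPdf μ₁ x

open Real MeasureTheory Set Filter

theorem exists_ratio_hasDerivAt_eq_ratio_slope_uIoo {f f' g g' : ℝ → ℝ} {a b : ℝ}
    (hab : a ≠ b) (hf : ContinuousOn f (uIcc a b)) (hff' : ∀ x ∈ uIoo a b, HasDerivAt f (f' x) x)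
    (hg : ContinuousOn g (uIcc a b)) (hgg' : ∀ x ∈ uIoo a b, HasDerivAt g (g' x) x) :
    ∃ c ∈ uIoo a b, (g b - g a) * f' c = (f b - f a) * g' c := by
  wlog h : a < b generalizing a b
  · rw [uIcc_comm] at hf hg
    rw [uIoo_comm] at hff' hgg'
    obtain ⟨c, hc, hslope⟩ := this hab.symm hf hff' hg hgg' (hab.lt_or_gt.resolve_left h)
    exact ⟨c, uIoo_comm a b ▸ hc, by linarith⟩
  rw [uIcc_of_lt h] at hf hg
  rw [uIoo_of_lt h] at hff' hgg' ⊢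
  exact exists_ratio_hasDerivAt_eq_ratio_slope f f' h hf hff' g g' hg hgg'

theorem taylor_mean_remainder_lagrange_of_hasDerivAt {f f' f'' : ℝ → ℝ} {a b : ℝ}
    (hf : ∀ x ∈ uIcc a b, HasDerivAt f (f' x) x) (hf' : ∀ x ∈ uIcc a b, HasDerivAt f' (f'' x) x) :
    ∃ ξ ∈ uIcc a b, f b = f a + f' a * (b - a) + f'' ξ / 2 * (b - a) ^ 2 := by
  rcases eq_or_ne a b with rfl | hab
  · exact ⟨a, left_mem_uIcc, by ring⟩
  set F : ℝ → ℝ := fun t => f b - f t - f' t * (b - t)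
  have hF : ∀ t ∈ uIcc a b, HasDerivAt F (-f'' t * (b - t)) t := fun t ht =>
    (((hf t ht).const_sub (f b)).sub ((hf' t ht).mul ((hasDerivAt_id' t).const_sub b))).congr_deriv
      (by ring)
  have hG : ∀ t, HasDerivAt (fun t => (b - t) ^ 2) (-2 * (b - t)) t := fun t =>
    (((hasDerivAt_id' t).const_sub b).pow 2).congr_deriv (by ring)
  obtain ⟨c, hc, hslope⟩ := exists_ratio_hasDerivAt_eq_ratio_slope_uIoo hab
    (fun t ht => (hF t ht).continuousAt.continuousWithinAt)
    (fun t ht => hF t (uIoo_subset_uIcc_self ht))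
    (fun t _ => (hG t).continuousAt.continuousWithinAt) (fun t _ => hG t)
  have hcb : b - c ≠ 0 := by
    refine sub_ne_zero.2 fun hbc => ?_
    subst hbc
    simp only [uIoo, mem_Ioo, inf_lt_iff, lt_sup_iff, lt_self_iff_false, or_false] at hc
    linarith
  have hFa : 2 * F a = f'' c * (b - a) ^ 2 := by
    refine mul_left_cancel₀ hcb ?_
    simp only [F, sub_self, mul_zero] at hslope ⊢
    linear_combination -hslope
  refine ⟨c, uIoo_subset_uIcc_self hc, ?_⟩
  simp only [F] at hFa
  linarith

theorem gaussPdf_eq_gaussianPDFReal : gaussPdf = ProbabilityTheory.gaussianPDFReal 0 1 := by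
  ext x
  simp [gaussPdf, ProbabilityTheory.gaussianPDFReal]

theorem gaussPdf_pos (x : ℝ) : 0 < gaussPdf x := by
  unfold gaussPdf; positivity

@[simp]
theorem gaussPdf_neg (x : ℝ) : gaussPdf (-x) = gaussPdf x := by
  simp [gaussPdf]

theorem continuous_gaussPdf : Continuous gaussPdf := by
  unfold gaussPdf; fun_prop

theorem integrable_gaussPdf : Integrable gaussPdf :=
  gaussPdf_eq_gaussianPDFReal ▸ ProbabilityTheory.integrable_gaussianPDFReal 0 1

theorem integral_gaussPdf : ∫ x, gaussPdf x = 1 :=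
  gaussPdf_eq_gaussianPDFReal ▸ ProbabilityTheory.integral_gaussianPDFReal_eq_one 0 one_ne_zero

theorem integrable_mul_gaussPdf : Integrable fun x => x * gaussPdf x := by
  refine ((integrable_mul_exp_neg_mul_sq one_half_pos).const_mul (√(2 * π))⁻¹).congr
    (ae_of_all _ fun x => ?_)
  simp only [gaussPdf]; ring_nf

theorem hasDerivAt_gaussPdf (x : ℝ) : HasDerivAt gaussPdf (-x * gaussPdf x) x := by
  have h := ((((hasDerivAt_pow 2 x).fun_neg).div_const 2).exp).const_mul (√(2 * π))⁻¹
  exact h.congr_deriv (by simp only [gaussPdf]; ring)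

theorem tendsto_gaussPdf_cocompact : Tendsto gaussPdf (cocompact ℝ) (nhds 0) := by
  have h := (tendsto_rpow_abs_mul_exp_neg_mul_sq_cocompact one_half_pos 0).const_mul (√(2 * π))⁻¹
  simp only [rpow_zero, one_mul, mul_zero] at h
  convert h using 2 with x
  simp only [gaussPdf]; ring_nf

theorem integral_Ioi_gaussPdf (x : ℝ) : ∫ t in Ioi x, gaussPdf t = 1 - gaussCdf x := by
  rw [← compl_Iic, setIntegral_compl measurableSet_Iic integrable_gaussPdf, integral_gaussPdf,
    gaussCdf]

theorem integral_Ioi_mul_gaussPdf (x : ℝ) : ∫ t in Ioi x, t * gaussPdf t = gaussPdf x := by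
  simpa using integral_Ioi_of_hasDerivAt_of_tendsto' (a := x) (m := 0) (f := fun t => -gaussPdf t)
    (fun t _ => by simpa using (hasDerivAt_gaussPdf t).fun_neg) integrable_mul_gaussPdf.integrableOn
    (by simpa using (tendsto_gaussPdf_cocompact.mono_left atTop_le_cocompact).neg)

theorem integral_Iic_mul_gaussPdf (x : ℝ) : ∫ t in Iic x, t * gaussPdf t = -gaussPdf x := by
  simpa using integral_Iic_of_hasDerivAt_of_tendsto' (a := x) (m := 0) (f := fun t => -gaussPdf t)
    (fun t _ => by simpa using (hasDerivAt_gaussPdf t).fun_neg) integrable_mul_gaussPdf.integrableOn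
    (by simpa using (tendsto_gaussPdf_cocompact.mono_left atBot_le_cocompact).neg)

theorem gaussCdf_pos (x : ℝ) : 0 < gaussCdf x := by
  rw [gaussCdf, setIntegral_pos_iff_support_of_nonneg_ae (ae_of_all _ fun t => (gaussPdf_pos t).le)
    integrable_gaussPdf.integrableOn, Function.support_eq_univ fun t => (gaussPdf_pos t).ne',
    univ_inter, Real.volume_Iic]
  exact ENNReal.zero_lt_top

theorem gaussCdf_neg (x : ℝ) : gaussCdf (-x) = 1 - gaussCdf x := by
  rw [gaussCdf, ← integral_Ioi_gaussPdf x, ← integral_Ici_eq_integral_Ioi,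
    ← (Measure.measurePreserving_neg volume).setIntegral_preimage_emb
      (Homeomorph.neg ℝ).measurableEmbedding]
  simp

theorem hasDerivAt_gaussCdf (x : ℝ) : HasDerivAt gaussCdf (gaussPdf x) x := by
  have hcdf : gaussCdf = fun y => gaussCdf 0 + ∫ t in (0 : ℝ)..y, gaussPdf t := by
    ext y
    rw [← intervalIntegral.integral_Iic_sub_Iic integrable_gaussPdf.integrableOn
      integrable_gaussPdf.integrableOn, gaussCdf, gaussCdf]
    ring
  rw [hcdf]
  exact (intervalIntegral.integral_hasDerivAt_right integrable_gaussPdf.intervalIntegrable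
    (continuous_gaussPdf.stronglyMeasurableAtFilter _ _)
    continuous_gaussPdf.continuousAt).const_add _

theorem gaussPdf_add_mul_gaussCdf_nonneg (x : ℝ) : 0 ≤ gaussPdf x + x * gaussCdf x := by
  have h : ∫ t in Iic x, t * gaussPdf t ≤ ∫ t in Iic x, x * gaussPdf t :=
    setIntegral_mono_on integrable_mul_gaussPdf.integrableOn
      (integrable_gaussPdf.integrableOn.const_mul x) measurableSet_Iic
      fun t ht => mul_le_mul_of_nonneg_right ht (gaussPdf_pos t).le
  rw [integral_Iic_mul_gaussPdf, integral_const_mul, ← gaussCdf] at h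
  linarith

theorem millsQ_eq (x : ℝ) :
    millsQ x = gaussPdf x * (gaussPdf x + x * gaussCdf x) / gaussCdf x ^ 2 := by
  have := (gaussCdf_pos x).ne'
  rw [millsQ]; field_simp

theorem millsQ_nonneg (x : ℝ) : 0 ≤ millsQ x := by
  rw [millsQ_eq]
  have := (gaussPdf_pos x).le
  have := gaussPdf_add_mul_gaussCdf_nonneg x
  positivity

theorem hasDerivAt_log_gaussCdf (x : ℝ) :
    HasDerivAt (fun y => log (gaussCdf y)) (gaussPdf x / gaussCdf x) x :=
  (hasDerivAt_gaussCdf x).log (gaussCdf_pos x).ne'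

theorem hasDerivAt_gaussPdf_div_gaussCdf (x : ℝ) :
    HasDerivAt (fun y => gaussPdf y / gaussCdf y) (-millsQ x) x := by
  have := (gaussCdf_pos x).ne'
  exact ((hasDerivAt_gaussPdf x).div (hasDerivAt_gaussCdf x) this).congr_deriv
    (by rw [millsQ]; field_simp; ring)

theorem setIntegral_Ici_comp_sub_right (g : ℝ → ℝ) (a c : ℝ) :
    ∫ x in Ici a, g (x - c) = ∫ y in Ici (a - c), g y := by
  rw [← (measurePreserving_sub_right volume c).setIntegral_preimage_emb
    (Homeomorph.subRight c).measurableEmbedding g (Ici (a - c))]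
  congr 2
  ext x; simp

theorem tnPdf_of_nonneg {μ x : ℝ} (hx : 0 ≤ x) : tnPdf μ x = gaussPdf (x - μ) / gaussCdf μ := by
  rw [tnPdf, if_pos hx, gaussPdf, div_mul_eq_div_div, div_eq_inv_mul (rexp _)]

theorem integrableOn_tnPdf (μ : ℝ) : IntegrableOn (tnPdf μ) (Ici 0) :=
  IntegrableOn.congr_fun ((integrable_gaussPdf.comp_sub_right μ).div_const _).integrableOn
    (fun _ hx => (tnPdf_of_nonneg hx).symm) measurableSet_Ici

theorem integrableOn_sub_mul_tnPdf (μ : ℝ) :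
    IntegrableOn (fun x => (x - μ) * tnPdf μ x) (Ici 0) :=
  IntegrableOn.congr_fun ((integrable_mul_gaussPdf.comp_sub_right μ).div_const _).integrableOn
    (fun _ hx => by rw [tnPdf_of_nonneg hx, mul_div_assoc]) measurableSet_Ici

theorem integral_tnPdf (μ : ℝ) : ∫ x in Ici 0, tnPdf μ x = 1 := by
  rw [setIntegral_congr_fun measurableSet_Ici fun _ hx => tnPdf_of_nonneg hx, integral_div,
    setIntegral_Ici_comp_sub_right gaussPdf, integral_Ici_eq_integral_Ioi, integral_Ioi_gaussPdf,
    zero_sub, gaussCdf_neg, sub_sub_cancel, div_self (gaussCdf_pos μ).ne']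

theorem integral_sub_mul_tnPdf (μ : ℝ) :
    ∫ x in Ici 0, (x - μ) * tnPdf μ x = gaussPdf μ / gaussCdf μ := by
  rw [setIntegral_congr_fun measurableSet_Ici fun _ hx => by
      rw [tnPdf_of_nonneg hx, ← mul_div_assoc],
    integral_div, setIntegral_Ici_comp_sub_right (fun y => y * gaussPdf y),
    integral_Ici_eq_integral_Ioi, integral_Ioi_mul_gaussPdf, zero_sub, gaussPdf_neg]

theorem log_gaussPdf_div_gaussPdf (a b : ℝ) :
    log (gaussPdf a / gaussPdf b) = (b ^ 2 - a ^ 2) / 2 := by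
  rw [gaussPdf, gaussPdf, mul_div_mul_left _ _ (by positivity), ← exp_sub, log_exp]
  ring

theorem log_tnPdf_div_tnPdf {μ₁ μ₂ x : ℝ} (hx : 0 ≤ x) :
    log (tnPdf μ₁ x / tnPdf μ₂ x) =
      (μ₁ - μ₂) * (x - μ₁) + ((μ₁ - μ₂) ^ 2 / 2 + log (gaussCdf μ₂) - log (gaussCdf μ₁)) := by
  rw [tnPdf_of_nonneg hx, tnPdf_of_nonneg hx, div_div_div_eq, mul_comm (gaussPdf _),
    ← div_mul_div_comm, log_mul (div_pos (gaussCdf_pos _) (gaussCdf_pos _)).ne'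
      (div_pos (gaussPdf_pos _) (gaussPdf_pos _)).ne',
    log_div (gaussCdf_pos _).ne' (gaussCdf_pos _).ne', log_gaussPdf_div_gaussPdf]
  ring

theorem klTN_eq (μ₁ μ₂ : ℝ) :
    klTN μ₁ μ₂ = (μ₁ - μ₂) * (gaussPdf μ₁ / gaussCdf μ₁)
      + ((μ₁ - μ₂) ^ 2 / 2 + log (gaussCdf μ₂) - log (gaussCdf μ₁)) := by
  rw [klTN, setIntegral_congr_fun measurableSet_Ici fun _ hx => by
      rw [log_tnPdf_div_tnPdf hx, add_mul, mul_assoc],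
    integral_add ((integrableOn_sub_mul_tnPdf μ₁).const_mul _)
      ((integrableOn_tnPdf μ₁).const_mul _),
    integral_const_mul, integral_const_mul, integral_sub_mul_tnPdf, integral_tnPdf, mul_one]

theorem stmt2 (μ₁ μ₂ : ℝ) :
    (∃ ξ ∈ Set.uIcc μ₁ μ₂,
        klTN μ₁ μ₂ = (1 / 2) * (1 - millsQ ξ) * (μ₁ - μ₂) ^ 2) ∧
      klTN μ₁ μ₂ ≤ (1 / 2) * (μ₁ - μ₂) ^ 2 := by
  obtain ⟨ξ, hξ, htaylor⟩ := taylor_mean_remainder_lagrange_of_hasDerivAt (a := μ₁) (b := μ₂)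
    (fun x _ => hasDerivAt_log_gaussCdf x) (fun x _ => hasDerivAt_gaussPdf_div_gaussCdf x)
  have hkl : klTN μ₁ μ₂ = (1 / 2) * (1 - millsQ ξ) * (μ₁ - μ₂) ^ 2 := by
    rw [klTN_eq]
    linear_combination htaylor
  refine ⟨⟨ξ, hξ, hkl⟩, ?_⟩
  rw [hkl]
  nlinarith [millsQ_nonneg ξ, sq_nonneg (μ₁ - μ₂)]
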